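/- Let I_k^{(d)} = ⋂_g ℘_g^d be the ideal of the scheme of fat points of multiplicity d supported on the k^n points [1:ξ^{g₁}:…:ξ^{gₙ}] of ℙ^n. Then I_k^{(d)} = (x₀^k − x_n^k, x₁^k − x_n^k, …, x_{n−1}^k − x_n^k)^d; in particular, I_k^{(d)} is generated by the degree-kd forms ∏_{i=0}^{n−1} (x_i^k − x_n^k)^{a_i} with a ∈ ℕ^n, a₀+…+a_{n−1} = d, and I_k^{(d)} equals the d-th ordinary power ( ⋂_g ℘_g )^d. -/

import Mathlib

open MvPolynomial

/-- The vanishing ideal `℘_g` of the point `[1:ξ^{g₁}:…:ξ^{gₙ}] ∈ ℙⁿ`,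
generated by the linear forms `x_i − ξ^{g_i}·x₀`, `i = 1,…,n`. -/
noncomputable def qIdeal (n k : ℕ) (ξ : ℂ) (g : Fin n → ZMod k) :
    Ideal (MvPolynomial (Fin (n+1)) ℂ) :=
  Ideal.span { p | ∃ i : Fin n,
    p = X i.succ - C (ξ ^ (g i).val) * X (0 : Fin (n+1)) }

/-- The fat-point ideal `I_k^{(d)} = ⋂_{g ∈ (ℤ/kℤ)^n} ℘_g^d`. -/
noncomputable def fatIdealK (n k d : ℕ) (ξ : ℂ) :
    Ideal (MvPolynomial (Fin (n+1)) ℂ) :=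
  ⨅ g : Fin n → ZMod k, (qIdeal n k ξ g) ^ d

/-!
The group `(ℤ/k)ⁿ` acts on `S` by `x_i ↦ ξ^{g_i} x_i`, carrying each `℘_g` onto `℘_0`, so an
element of `I_k^{(d)}` splits into isotypic components, each of which lies in `℘_0^d`. An
isotypic component has the form `x^χ · F(x₀, x₁^k, …, xₙ^k)` with `0 ≤ χ_i < k`. The monomial
`x^χ` does not vanish at `P_0 = [1:…:1]` and `℘_0^d` is `℘_0`-primary, so
`F(x₀, x^k) ∈ ℘_0^d`. Since `x_i ↦ x_i^k` is étale over `P_0` (`k ≠ 0`), this forces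
`F ∈ (x_i − x₀^k)^d`, i.e. `F(x₀, x^k) ∈ (x_i^k − x₀^k)^d`. Orders of vanishing are measured
after a triangular change of coordinates moves the point to `[1:0:…:0]`, by grading by the degree
in `x₁, …, xₙ`.
-/

theorem exists_C_add_C_mul_X_pow_sub {A : Type*} [CommRing A] (a b : A) (k : ℕ) :
    ∃ s : Polynomial A, (Polynomial.C b + Polynomial.C a * Polynomial.X) ^ k - Polynomial.C b ^ k
      = Polynomial.X * (Polynomial.C (k * b ^ (k - 1) * a) + Polynomial.X * s) := by
  obtain ⟨c, hc⟩ := (Polynomial.X ^ k : Polynomial (Polynomial A)).binomExpansion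
    (Polynomial.C b) (Polynomial.C a * Polynomial.X)
  refine ⟨c * Polynomial.C a ^ 2, ?_⟩
  simp only [Polynomial.eval_pow, Polynomial.eval_X, Polynomial.derivative_X_pow,
    Polynomial.eval_mul, Polynomial.eval_C] at hc
  rw [hc]
  simp only [map_mul, map_pow, map_natCast]
  ring

theorem Ideal.span_range_pow_eq_span_prod_pow {R : Type*} [CommRing R] {ι : Type*} [Fintype ι]
    (y : ι → R) (d : ℕ) :
    Ideal.span (Set.range y) ^ d
      = Ideal.span {p | ∃ a : ι → ℕ, ∑ i, a i = d ∧ p = ∏ i, y i ^ a i} := by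
  rw [Ideal.span_pow_eq_map_homogeneousSubmodule, homogeneousSubmodule_eq_finsupp_supported,
    AddMonoidAlgebra.supported_eq_span_single, Submodule.map_span, ← Set.image_comp]
  congr 1
  ext p
  simp only [Set.mem_image, Set.mem_ofPred_eq, Function.comp_apply, AlgHom.toLinearMap_apply,
    single_eq_monomial, aeval_monomial, map_one, one_mul]
  constructor
  · rintro ⟨e, he, rfl⟩
    exact ⟨e, by rwa [← Finsupp.degree_eq_sum], Finsupp.prod_fintype _ _ (by simp)⟩
  · rintro ⟨a, ha, rfl⟩
    refine ⟨Finsupp.equivFunOnFinite.symm a, by simpa [Finsupp.degree_eq_sum] using ha, ?_⟩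
    rw [Finsupp.prod_fintype _ _ (by simp)]
    rfl

theorem span_range_succ_sub_eq {R : Type*} [CommRing R] {n : ℕ} (y : Fin (n + 1) → R) :
    Ideal.span (Set.range fun i : Fin n => y i.succ - y 0)
      = Ideal.span (Set.range fun i : Fin n => y i.castSucc - y (Fin.last n)) := by
  have hsub (I : Ideal R) (a : Fin (n + 1)) (h : ∀ j, y j - y a ∈ I) (j j' : Fin (n + 1)) :
      y j - y j' ∈ I := by
    simpa using sub_mem (h j) (h j')
  apply le_antisymm <;> rw [Ideal.span_le] <;> rintro _ ⟨i, rfl⟩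
  · refine hsub _ (Fin.last n) (fun j => ?_) _ _
    induction j using Fin.lastCases with
    | last => simp
    | cast j => exact Ideal.subset_span ⟨j, rfl⟩
  · refine hsub _ 0 (fun j => ?_) _ _
    induction j using Fin.cases with
    | zero => simp
    | succ j => exact Ideal.subset_span ⟨j, rfl⟩

noncomputable section

namespace FatPoints

section TailIdeal

variable {R : Type*} [CommRing R] {n : ℕ}

variable (R n) in
def tailIdeal : Ideal (MvPolynomial (Fin (n + 1)) R) :=
  Ideal.span (Set.range fun i : Fin n => X i.succ)

variable (R n) in
def scaleTail :
    MvPolynomial (Fin (n + 1)) R →ₐ[R] Polynomial (MvPolynomial (Fin (n + 1)) R) :=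
  aeval (Fin.cases (Polynomial.C (X 0)) fun i => Polynomial.C (X i.succ) * Polynomial.X)

theorem eval_one_scaleTail (G : MvPolynomial (Fin (n + 1)) R) :
    (scaleTail R n G).eval 1 = G := by
  have : (Polynomial.evalRingHom 1).comp (scaleTail R n).toRingHom = RingHom.id _ := by
    apply MvPolynomial.ringHom_ext
    · intro r
      simp [scaleTail, Polynomial.algebraMap_apply, MvPolynomial.algebraMap_eq]
    · intro j
      induction j using Fin.cases <;> simp [scaleTail]
  exact RingHom.congr_fun this G

theorem scaleTail_mem_reesAlgebra (G : MvPolynomial (Fin (n + 1)) R) :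
    scaleTail R n G ∈ reesAlgebra (tailIdeal R n) := by
  induction G using MvPolynomial.induction_on with
  | C r =>
    rw [scaleTail, aeval_C, Polynomial.algebraMap_apply, ← Polynomial.monomial_zero_left,
      reesAlgebra.monomial_mem, pow_zero, Ideal.one_eq_top]
    exact Submodule.mem_top
  | add G H hG hH => rw [map_add]; exact add_mem hG hH
  | mul_X G j hG =>
    rw [map_mul]
    refine mul_mem hG ?_
    induction j using Fin.cases with
    | zero =>
      rw [scaleTail, aeval_X, Fin.cases_zero, ← Polynomial.monomial_zero_left,
        reesAlgebra.monomial_mem, pow_zero, Ideal.one_eq_top]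
      exact Submodule.mem_top
    | succ i =>
      rw [scaleTail, aeval_X, Fin.cases_succ, ← Polynomial.monomial_one_one_eq_X,
        Polynomial.C_mul_monomial, mul_one, reesAlgebra.monomial_mem, pow_one]
      exact Ideal.subset_span ⟨i, rfl⟩

theorem mem_tailIdeal_pow_iff {G : MvPolynomial (Fin (n + 1)) R} {d : ℕ} :
    G ∈ tailIdeal R n ^ d ↔ Polynomial.X ^ d ∣ scaleTail R n G := by
  constructor
  · intro hG
    have hmap : Ideal.map (scaleTail R n) (tailIdeal R n) ≤ Ideal.span {Polynomial.X} := by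
      rw [tailIdeal, Ideal.map_span, Ideal.span_le]
      rintro _ ⟨_, ⟨i, rfl⟩, rfl⟩
      exact Ideal.mem_span_singleton.2
        ⟨Polynomial.C (X i.succ), by simp [scaleTail, Polynomial.X_mul_C]⟩
    rw [← Ideal.mem_span_singleton, ← Ideal.span_singleton_pow]
    refine Ideal.pow_right_mono hmap d ?_
    rw [← Ideal.map_pow]
    exact Ideal.mem_map_of_mem _ hG
  · intro hG
    rw [Polynomial.X_pow_dvd_iff] at hG
    rw [← eval_one_scaleTail G, Polynomial.eval_eq_sum_range]
    refine Ideal.sum_mem _ fun j _ => ?_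
    rw [one_pow, mul_one]
    rcases lt_or_ge j d with hj | hj
    · rw [hG j hj]
      exact zero_mem _
    · exact Ideal.pow_le_pow_right hj (scaleTail_mem_reesAlgebra G j)

theorem mem_tailIdeal_pow_of_mul_mem [IsDomain R] {a b : MvPolynomial (Fin (n + 1)) R} {d : ℕ}
    (ha : a ∉ tailIdeal R n) (hab : a * b ∈ tailIdeal R n ^ d) : b ∈ tailIdeal R n ^ d := by
  rw [← pow_one (tailIdeal R n), mem_tailIdeal_pow_iff, pow_one] at ha
  rw [mem_tailIdeal_pow_iff, map_mul] at hab
  rw [mem_tailIdeal_pow_iff]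
  exact Polynomial.prime_X.pow_dvd_of_dvd_mul_left d ha hab

end TailIdeal

section Shear

variable {R : Type*} [CommRing R] {n : ℕ}

def shearHom (p : Fin n → Polynomial R) :
    MvPolynomial (Fin (n + 1)) R →ₐ[R] MvPolynomial (Fin (n + 1)) R :=
  aeval (Fin.cases (X 0) fun i => X i.succ + Polynomial.aeval (X 0) (p i))

theorem shearHom_aeval_X_zero (p : Fin n → Polynomial R) (q : Polynomial R) :
    shearHom p (Polynomial.aeval (X 0) q) = Polynomial.aeval (X 0) q := by
  rw [← Polynomial.aeval_algHom_apply, shearHom, aeval_X, Fin.cases_zero]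

theorem shearHom_comp_shearHom_neg (p : Fin n → Polynomial R) :
    (shearHom p).comp (shearHom (-p)) = AlgHom.id R _ := by
  apply algHom_ext
  intro j
  induction j using Fin.cases with
  | zero => simp [shearHom]
  | succ i =>
    have h : shearHom (-p) (X i.succ) = X i.succ - Polynomial.aeval (X 0) (p i) := by
      simp [shearHom, sub_eq_add_neg]
    rw [AlgHom.comp_apply, h, map_sub, shearHom_aeval_X_zero]
    simp [shearHom]

def shear (p : Fin n → Polynomial R) :
    MvPolynomial (Fin (n + 1)) R ≃ₐ[R] MvPolynomial (Fin (n + 1)) R :=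
  AlgEquiv.ofAlgHom (shearHom p) (shearHom (-p)) (shearHom_comp_shearHom_neg p)
    (by simpa using shearHom_comp_shearHom_neg (-p))

theorem shear_apply (p : Fin n → Polynomial R) (F : MvPolynomial (Fin (n + 1)) R) :
    shear p F = shearHom p F :=
  rfl

def graphIdeal (p : Fin n → Polynomial R) : Ideal (MvPolynomial (Fin (n + 1)) R) :=
  Ideal.span (Set.range fun i => X i.succ - Polynomial.aeval (X 0) (p i))

theorem map_shear_graphIdeal (p : Fin n → Polynomial R) :
    Ideal.map (shear p) (graphIdeal p) = tailIdeal R n := by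
  rw [graphIdeal, Ideal.map_span, ← Set.range_comp, tailIdeal]
  congr 2
  funext i
  rw [Function.comp_apply, shear_apply, map_sub, shearHom_aeval_X_zero]
  simp [shearHom]

theorem mem_graphIdeal_pow_iff {p : Fin n → Polynomial R} {F : MvPolynomial (Fin (n + 1)) R}
    {d : ℕ} : F ∈ graphIdeal p ^ d ↔ shear p F ∈ tailIdeal R n ^ d := by
  rw [← map_shear_graphIdeal, ← Ideal.map_pow, Ideal.mem_map_of_equiv]
  exact ⟨fun hF => ⟨F, hF, rfl⟩, fun ⟨G, hG, hGF⟩ => (shear p).injective hGF ▸ hG⟩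

theorem mem_graphIdeal_pow_of_mul_mem [IsDomain R] {p : Fin n → Polynomial R}
    {a b : MvPolynomial (Fin (n + 1)) R} {d : ℕ} (ha : a ∉ graphIdeal p)
    (hab : a * b ∈ graphIdeal p ^ d) : b ∈ graphIdeal p ^ d := by
  rw [← pow_one (graphIdeal p), mem_graphIdeal_pow_iff, pow_one] at ha
  rw [mem_graphIdeal_pow_iff, map_mul] at hab
  rw [mem_graphIdeal_pow_iff]
  exact mem_tailIdeal_pow_of_mul_mem ha hab

theorem graphIdeal_X_le_ker_eval_one :
    graphIdeal (fun _ : Fin n => Polynomial.X) ≤ RingHom.ker (eval (1 : Fin (n + 1) → R)) := by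
  rw [graphIdeal, Ideal.span_le]
  rintro _ ⟨i, rfl⟩
  simp

end Shear

section PowTail

variable {R : Type*} [CommRing R] {n : ℕ}

variable (R n) in
def powTail (k : ℕ) : MvPolynomial (Fin (n + 1)) R →ₐ[R] MvPolynomial (Fin (n + 1)) R :=
  aeval (Fin.cases (X 0) fun i => X i.succ ^ k)

variable (R n) in
def powShift (k : ℕ) : MvPolynomial (Fin (n + 1)) R →ₐ[R] MvPolynomial (Fin (n + 1)) R :=
  aeval (Fin.cases (X 0) fun i => (X i.succ + X 0) ^ k - X 0 ^ k)

theorem powShift_shear (k : ℕ) (H : MvPolynomial (Fin (n + 1)) R) :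
    powShift R n k (shear (fun _ => Polynomial.X ^ k) H)
      = shear (fun _ => Polynomial.X) (powTail R n k H) := by
  have : (powShift R n k).comp (shear fun _ => Polynomial.X ^ k).toAlgHom
      = (shear fun _ => Polynomial.X).toAlgHom.comp (powTail R n k) := by
    apply algHom_ext
    intro j
    induction j using Fin.cases <;> simp [shear_apply, shearHom, powShift, powTail]
  exact AlgHom.congr_fun this H

theorem map_powTail_graphIdeal (k : ℕ) :
    Ideal.map (powTail R n k) (graphIdeal fun _ => Polynomial.X ^ k)
      = Ideal.span (Set.range fun i : Fin n => X i.succ ^ k - X 0 ^ k) := by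
  rw [graphIdeal, Ideal.map_span, ← Set.range_comp]
  congr 2
  funext i
  simp [powTail]

theorem exists_eq_prod_X_pow_mul_powTail {k : ℕ} {r : Fin n → ℕ}
    (F : MvPolynomial (Fin (n + 1)) R)
    (hF : ∀ e ∈ F.support, ∀ i, e i.succ % k = r i) :
    ∃ H, F = (∏ i, X i.succ ^ r i) * powTail R n k H := by
  suffices F ∈ LinearMap.range
      (LinearMap.mulLeft R (∏ i, X i.succ ^ r i) ∘ₗ (powTail R n k).toLinearMap) by
    obtain ⟨H, hH⟩ := this
    exact ⟨H, hH.symm⟩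
  rw [← F.support_sum_monomial_coeff]
  refine Submodule.sum_mem _ fun e he =>
    ⟨C (coeff e F) * X 0 ^ e 0 * ∏ i : Fin n, X i.succ ^ (e i.succ / k), ?_⟩
  have hsplit (i : Fin n) : (X i.succ : MvPolynomial (Fin (n + 1)) R) ^ e i.succ
      = X i.succ ^ r i * (X i.succ ^ k) ^ (e i.succ / k) := by
    rw [← pow_mul, ← pow_add, ← hF e he i, Nat.mod_add_div]
  simp only [LinearMap.coe_comp, Function.comp_apply, AlgHom.toLinearMap_apply,
    LinearMap.mulLeft_apply, map_mul, map_prod, map_pow, powTail, aeval_C, aeval_X,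
    Fin.cases_zero, Fin.cases_succ, MvPolynomial.algebraMap_eq]
  rw [monomial_eq, Finsupp.prod_fintype _ _ fun _ => pow_zero _, Fin.prod_univ_succ]
  simp_rw [hsplit, Finset.prod_mul_distrib]
  ring

theorem exists_scaleTail_powShift (k : ℕ) :
    ∃ Ψ : Polynomial (MvPolynomial (Fin (n + 1)) R) →+*
        Polynomial (MvPolynomial (Fin (n + 1)) R),
      Ψ Polynomial.X = Polynomial.X ∧
      (∀ G, scaleTail R n (powShift R n k G) = Ψ (scaleTail R n G)) ∧
      ∀ P, (Ψ P).coeff 0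
        = aeval (Fin.cases (X 0) fun i => C (k : R) * X 0 ^ (k - 1) * X i.succ) (P.coeff 0) := by
  choose s hs using fun i : Fin n =>
    exists_C_add_C_mul_X_pow_sub (X i.succ : MvPolynomial (Fin (n + 1)) R) (X 0) k
  let ρ : MvPolynomial (Fin (n + 1)) R →ₐ[R] Polynomial (MvPolynomial (Fin (n + 1)) R) :=
    aeval (Fin.cases (Polynomial.C (X 0))
      fun i => Polynomial.C (C (k : R) * X 0 ^ (k - 1) * X i.succ) + Polynomial.X * s i)
  refine ⟨Polynomial.eval₂RingHom ρ.toRingHom Polynomial.X, Polynomial.eval₂_X _ _,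
    fun G => ?_, fun P => ?_⟩
  · refine RingHom.congr_fun (f := ((scaleTail R n).comp (powShift R n k)).toRingHom)
      (g := (Polynomial.eval₂RingHom ρ.toRingHom Polynomial.X).comp (scaleTail R n).toRingHom)
      (MvPolynomial.ringHom_ext (fun r => ?_) fun j => ?_) G
    · simp [ρ, scaleTail, powShift, Polynomial.algebraMap_apply, MvPolynomial.algebraMap_eq]
    · induction j using Fin.cases with
      | zero => simp [ρ, scaleTail, powShift]
      | succ i =>
        have hsi := hs i
        simp only [map_mul, map_pow, map_natCast] at hsi
        simp [ρ, scaleTail, powShift]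
        rw [add_comm (Polynomial.C (X i.succ) * Polynomial.X), hsi, mul_comm]
  · rw [Polynomial.coeff_zero_eq_eval_zero, ← Polynomial.coe_evalRingHom,
      Polynomial.coe_eval₂RingHom, Polynomial.hom_eval₂, Polynomial.coe_evalRingHom,
      Polynomial.eval_X, Polynomial.eval₂_at_zero]
    refine RingHom.congr_fun (MvPolynomial.ringHom_ext (fun r => ?_) fun j => ?_) _
    · simp [ρ, Polynomial.algebraMap_apply, MvPolynomial.algebraMap_eq]
    · induction j using Fin.cases <;> simp [ρ]

end PowTail

section Etale

variable {K : Type*} [Field K] [Infinite K] {n : ℕ}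

theorem aeval_C_mul_X_zero_pow_mul_injective {c : K} (hc : c ≠ 0) (m : ℕ) :
    Function.Injective (aeval (Fin.cases (X 0) fun i => C c * X 0 ^ m * X i.succ) :
      MvPolynomial (Fin (n + 1)) K →ₐ[K] MvPolynomial (Fin (n + 1)) K) := by
  rw [injective_iff_map_eq_zero]
  intro P hP
  have hX0P : X 0 * P = 0 := MvPolynomial.funext fun b => by
    rw [map_mul, eval_X, map_zero]
    rcases eq_or_ne (b 0) 0 with hb | hb
    · rw [hb, zero_mul]
    · let a : Fin (n + 1) → K := Fin.cases (b 0) fun i => b i.succ / (c * b 0 ^ m)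
      have hab : (fun j => aeval a (Fin.cases (X 0) (fun i => C c * X 0 ^ m * X i.succ) j :
          MvPolynomial (Fin (n + 1)) K)) = b := by
        funext j
        induction j using Fin.cases with
        | zero => simp [a]
        | succ i => simp [a]; field_simp
      have := congrArg (aeval a) hP
      rw [comp_aeval_apply, map_zero, hab] at this
      exact mul_eq_zero_of_right _ (by simpa using this)
  exact (mul_eq_zero.1 hX0P).resolve_left (X_ne_zero _)

theorem mem_tailIdeal_pow_of_powShift_mem {k d : ℕ} (hk : (k : K) ≠ 0)
    {G : MvPolynomial (Fin (n + 1)) K} (h : powShift K n k G ∈ tailIdeal K n ^ d) :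
    G ∈ tailIdeal K n ^ d := by
  obtain ⟨Ψ, hΨX, hΨ, hΨ0⟩ := exists_scaleTail_powShift (R := K) (n := n) k
  by_contra hG
  rw [mem_tailIdeal_pow_iff] at h hG
  obtain ⟨P, hP, hXP⟩ := Polynomial.exists_eq_pow_rootMultiplicity_mul_and_not_dvd
    (scaleTail K n G) (fun h0 => hG (h0 ▸ dvd_zero _)) 0
  simp only [map_zero, sub_zero] at hP hXP
  set μ := Polynomial.rootMultiplicity 0 (scaleTail K n G)
  have hμ : μ < d := by
    by_contra! hdμ
    exact hG (hP ▸ dvd_mul_of_dvd_left (pow_dvd_pow _ hdμ) _)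
  -- The lowest-order term `P(0) ≠ 0` of `scaleTail G` survives `Ψ`, which is injective mod `t`.
  rw [hΨ, hP, map_mul, map_pow, hΨX] at h
  have hXΨ : Polynomial.X ∣ Ψ P := by
    have := (pow_dvd_pow Polynomial.X (Nat.succ_le_of_lt hμ)).trans h
    rw [pow_succ] at this
    exact (mul_dvd_mul_iff_left (pow_ne_zero _ Polynomial.X_ne_zero)).1 this
  rw [Polynomial.X_dvd_iff, hΨ0] at hXΨ
  exact hXP (Polynomial.X_dvd_iff.2 (aeval_C_mul_X_zero_pow_mul_injective hk (k - 1)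
    (hXΨ.trans (map_zero _).symm)))

/-- The map `x_{i+1} ↦ x_{i+1}^k` is étale at `[1:1:…:1]`, so it preserves orders of
vanishing there. -/
theorem mem_graphIdeal_pow_of_powTail_mem {k d : ℕ} (hk : (k : K) ≠ 0)
    {H : MvPolynomial (Fin (n + 1)) K}
    (h : powTail K n k H ∈ graphIdeal (fun _ => Polynomial.X) ^ d) :
    H ∈ graphIdeal (fun _ : Fin n => Polynomial.X ^ k) ^ d := by
  rw [mem_graphIdeal_pow_iff] at h ⊢
  rw [← powShift_shear] at h
  exact mem_tailIdeal_pow_of_powShift_mem hk h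

theorem mem_span_pow_of_mem_graphIdeal_pow {k d : ℕ} (hk : (k : K) ≠ 0)
    {r : Fin n → ℕ} {F : MvPolynomial (Fin (n + 1)) K}
    (hF : F ∈ graphIdeal (fun _ => Polynomial.X) ^ d)
    (hres : ∀ e ∈ F.support, ∀ i, e i.succ % k = r i) :
    F ∈ Ideal.span (Set.range fun i : Fin n => X i.succ ^ k - X 0 ^ k) ^ d := by
  obtain ⟨H, rfl⟩ := exists_eq_prod_X_pow_mul_powTail F hres
  have hunit : (∏ i, X i.succ ^ r i : MvPolynomial (Fin (n + 1)) K) ∉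
      graphIdeal fun _ => Polynomial.X :=
    fun h => one_ne_zero (α := K) (by simpa using graphIdeal_X_le_ker_eval_one h)
  have hH := mem_graphIdeal_pow_of_powTail_mem hk (mem_graphIdeal_pow_of_mul_mem hunit hF)
  rw [← map_powTail_graphIdeal, ← Ideal.map_pow]
  exact Ideal.mul_mem_left _ _ (Ideal.mem_map_of_mem _ hH)

end Etale

section Isotypic

variable {R : Type*} [CommRing R] {n k : ℕ}

def twist (ψ : AddChar (ZMod k) R) (g : Fin n → ZMod k) :
    MvPolynomial (Fin (n + 1)) R →ₐ[R] MvPolynomial (Fin (n + 1)) R :=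
  aeval (Fin.cases (X 0) fun i => C (ψ (g i)) * X i.succ)

theorem twist_monomial (ψ : AddChar (ZMod k) R) (g : Fin n → ZMod k) (e : Fin (n + 1) →₀ ℕ)
    (c : R) : twist ψ g (monomial e c) = monomial e ((∏ i, ψ (g i * e i.succ)) * c) := by
  have hψ (i : Fin n) : ψ (g i * e i.succ) = ψ (g i) ^ e i.succ := by
    rw [mul_comm, ← nsmul_eq_mul, AddChar.map_nsmul_eq_pow]
  rw [twist, aeval_monomial, monomial_eq, Finsupp.prod_fintype _ _ fun _ => pow_zero _,
    Finsupp.prod_fintype _ _ fun _ => pow_zero _, Fin.prod_univ_succ, Fin.prod_univ_succ]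
  simp only [Fin.cases_zero, Fin.cases_succ, mul_pow, Finset.prod_mul_distrib, hψ, map_mul,
    map_prod, map_pow, MvPolynomial.algebraMap_eq]
  ring

theorem coeff_twist (ψ : AddChar (ZMod k) R) (g : Fin n → ZMod k) (e : Fin (n + 1) →₀ ℕ)
    (F : MvPolynomial (Fin (n + 1)) R) :
    coeff e (twist ψ g F) = (∏ i, ψ (g i * e i.succ)) * coeff e F := by
  induction F using MvPolynomial.induction_on' with
  | monomial e' c =>
    rw [twist_monomial, coeff_monomial, coeff_monomial]
    split_ifs with h
    · rw [h]
    · rw [mul_zero]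
  | add F G hF hG => rw [map_add, coeff_add, coeff_add, hF, hG, mul_add]

theorem sum_prod_addChar_mul [IsDomain R] [NeZero k] {ψ : AddChar (ZMod k) R}
    (hψ : ψ.IsPrimitive) (c : Fin n → ZMod k) :
    ∑ g : Fin n → ZMod k, ∏ i, ψ (g i * c i) = if c = 0 then (k : R) ^ n else 0 := by
  rw [← Fintype.prod_sum fun i a => ψ (a * c i)]
  simp_rw [AddChar.sum_mulShift _ hψ, ZMod.card, Nat.cast_ite, Nat.cast_zero]
  rw [Finset.prod_ite_zero]
  simp [funext_iff]

variable (k) in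
def tailResidue (e : Fin (n + 1) →₀ ℕ) : Fin n → ZMod k :=
  fun i => e i.succ

variable (k) in
/-- The part of `F` on which `(ℤ/k)ⁿ` acts through the character indexed by `χ`. -/
def isotypicComponent (χ : Fin n → ZMod k) (F : MvPolynomial (Fin (n + 1)) R) :
    MvPolynomial (Fin (n + 1)) R :=
  ∑ e ∈ F.support with tailResidue k e = χ, monomial e (coeff e F)

theorem coeff_isotypicComponent (χ : Fin n → ZMod k) (F : MvPolynomial (Fin (n + 1)) R)
    (e : Fin (n + 1) →₀ ℕ) :
    coeff e (isotypicComponent k χ F) = if tailResidue k e = χ then coeff e F else 0 := by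
  simp only [isotypicComponent, coeff_sum, coeff_monomial, Finset.sum_ite_eq', Finset.mem_filter,
    mem_support_iff]
  by_cases h : tailResidue k e = χ <;> by_cases he : coeff e F = 0 <;> simp [h, he]

theorem sum_isotypicComponent [NeZero k] (F : MvPolynomial (Fin (n + 1)) R) :
    ∑ χ, isotypicComponent k χ F = F := by
  ext e
  simp [coeff_sum, coeff_isotypicComponent]

theorem smul_isotypicComponent [IsDomain R] [NeZero k] {ψ : AddChar (ZMod k) R}
    (hψ : ψ.IsPrimitive) (χ : Fin n → ZMod k) (F : MvPolynomial (Fin (n + 1)) R) :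
    (k : R) ^ n • isotypicComponent k χ F
      = ∑ g, (∏ i, ψ (-(g i * χ i))) • twist ψ g F := by
  ext e
  have hchar : ∀ g : Fin n → ZMod k, (∏ i, ψ (-(g i * χ i))) * ∏ i, ψ (g i * e i.succ)
      = ∏ i, ψ (g i * (tailResidue k e - χ) i) := fun g => by
    rw [← Finset.prod_mul_distrib]
    refine Finset.prod_congr rfl fun i _ => ?_
    rw [← AddChar.map_add_eq_mul, Pi.sub_apply, tailResidue]
    ring_nf
  simp only [coeff_smul, coeff_sum, coeff_twist, coeff_isotypicComponent, smul_eq_mul,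
    ← mul_assoc, hchar, ← Finset.sum_mul, sum_prod_addChar_mul hψ, sub_eq_zero]
  split_ifs <;> ring

end Isotypic

section FatPointIdeal

variable {n k : ℕ} {ξ : ℂ}

theorem qIdeal_zero : qIdeal n k ξ 0 = graphIdeal fun _ => Polynomial.X := by
  rw [qIdeal, graphIdeal]
  congr 1
  ext p
  simp [eq_comm]

theorem twist_mem_qIdeal_zero_pow [NeZero k] (hξ : ξ ^ k = 1) (g : Fin n → ZMod k) {d : ℕ}
    {F : MvPolynomial (Fin (n + 1)) ℂ} (hF : F ∈ qIdeal n k ξ g ^ d) :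
    twist (AddChar.zmodChar k hξ) g F ∈ qIdeal n k ξ 0 ^ d := by
  have hle :
      Ideal.map (twist (AddChar.zmodChar k hξ) g) (qIdeal n k ξ g) ≤ qIdeal n k ξ 0 := by
    rw [qIdeal, Ideal.map_span, Ideal.span_le]
    rintro _ ⟨_, ⟨i, rfl⟩, rfl⟩
    have : twist (AddChar.zmodChar k hξ) g (X i.succ - C (ξ ^ (g i).val) * X 0)
        = C (ξ ^ (g i).val) * (X i.succ - C (ξ ^ ((0 : Fin n → ZMod k) i).val) * X 0) := by
      simp [twist, AddChar.zmodChar_apply]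
      ring
    rw [this]
    exact Ideal.mul_mem_left _ _ (Ideal.subset_span ⟨i, rfl⟩)
  exact Ideal.pow_right_mono hle d (by rw [← Ideal.map_pow]; exact Ideal.mem_map_of_mem _ hF)

theorem fatIdealK_le_span_pow [NeZero k] (hξ : IsPrimitiveRoot ξ k) (d : ℕ) :
    fatIdealK n k d ξ ≤ Ideal.span (Set.range fun i : Fin n => X i.succ ^ k - X 0 ^ k) ^ d := by
  intro F hF
  have hψ := AddChar.zmodChar_primitive_of_primitive_root k hξ
  have hk : (k : ℂ) ≠ 0 := Nat.cast_ne_zero.2 (NeZero.ne k)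
  rw [← sum_isotypicComponent (k := k) F]
  refine Ideal.sum_mem _ fun χ _ =>
    mem_span_pow_of_mem_graphIdeal_pow (r := fun i => (χ i).val) hk ?_ fun e he i => ?_
  · rw [← qIdeal_zero, ← inv_smul_smul₀ (pow_ne_zero n hk) (isotypicComponent k χ F),
      smul_isotypicComponent hψ, smul_eq_C_mul]
    refine Ideal.mul_mem_left _ _ (Ideal.sum_mem _ fun g _ => ?_)
    rw [smul_eq_C_mul]
    exact Ideal.mul_mem_left _ _ (twist_mem_qIdeal_zero_pow _ g (Ideal.mem_iInf.1 hF g))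
  · have hres : tailResidue k e = χ := by
      by_contra h
      exact mem_support_iff.1 he (by rw [coeff_isotypicComponent, if_neg h])
    rw [← hres, tailResidue, ZMod.val_natCast]

theorem span_pow_le_fatIdealK (hξ : ξ ^ k = 1) (d : ℕ) :
    Ideal.span (Set.range fun i : Fin n => X i.succ ^ k - X 0 ^ k) ^ d ≤ fatIdealK n k d ξ := by
  refine le_iInf fun g => Ideal.pow_right_mono ?_ d
  rw [Ideal.span_le]
  rintro _ ⟨i, rfl⟩
  have hroot : (C (ξ ^ (g i).val) * X 0 : MvPolynomial (Fin (n + 1)) ℂ) ^ k = X 0 ^ k := by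
    rw [mul_pow, ← map_pow, ← pow_mul, mul_comm (g i).val, pow_mul, hξ, one_pow, map_one,
      one_mul]
  rw [← hroot]
  exact Ideal.mem_of_dvd _ (sub_dvd_pow_sub_pow _ _ k) (Ideal.subset_span ⟨i, rfl⟩)

theorem fatIdealK_eq_span_pow [NeZero k] (hξ : IsPrimitiveRoot ξ k) (d : ℕ) :
    fatIdealK n k d ξ = Ideal.span (Set.range fun i : Fin n => X i.succ ^ k - X 0 ^ k) ^ d :=
  le_antisymm (fatIdealK_le_span_pow hξ d) (span_pow_le_fatIdealK hξ.pow_eq_one d)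

end FatPointIdeal

end FatPoints

end

theorem stmt17_general (n k d : ℕ) (hk : 2 ≤ k)
    (ξ : ℂ) (hξ : IsPrimitiveRoot ξ k) :
    fatIdealK n k d ξ
      = (Ideal.span { p : MvPolynomial (Fin (n+1)) ℂ |
          ∃ i : Fin n, p = X (Fin.castSucc i) ^ k - X (Fin.last n) ^ k }) ^ d ∧
    fatIdealK n k d ξ
      = Ideal.span { p : MvPolynomial (Fin (n+1)) ℂ |
          ∃ a : Fin n → ℕ, (∑ i, a i) = d ∧
            p = ∏ i : Fin n,
              (X (Fin.castSucc i) ^ k - X (Fin.last n) ^ k) ^ a i } ∧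
    fatIdealK n k d ξ = (⨅ g : Fin n → ZMod k, qIdeal n k ξ g) ^ d := by
  have : NeZero k := ⟨by omega⟩
  have hgens : {p : MvPolynomial (Fin (n + 1)) ℂ |
        ∃ i : Fin n, p = X i.castSucc ^ k - X (Fin.last n) ^ k}
      = Set.range fun i : Fin n => X i.castSucc ^ k - X (Fin.last n) ^ k := by
    ext p
    simp [eq_comm]
  have hfat (d : ℕ) : fatIdealK n k d ξ = Ideal.span {p : MvPolynomial (Fin (n + 1)) ℂ |
      ∃ i : Fin n, p = X i.castSucc ^ k - X (Fin.last n) ^ k} ^ d := by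
    rw [FatPoints.fatIdealK_eq_span_pow hξ, span_range_succ_sub_eq fun j => X j ^ k, hgens]
  refine ⟨hfat d, ?_, ?_⟩
  · rw [hfat d, hgens, Ideal.span_range_pow_eq_span_prod_pow]
  · have hinf : ⨅ g : Fin n → ZMod k, qIdeal n k ξ g = fatIdealK n k 1 ξ := by
      simp only [fatIdealK, pow_one]
    rw [hinf, hfat 1, pow_one, hfat d]

theorem stmt17 (n k d : ℕ) (hn : 1 ≤ n) (hk : 2 ≤ k) (hd : 1 ≤ d)
    (ξ : ℂ) (hξ : IsPrimitiveRoot ξ k) :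
    fatIdealK n k d ξ
      = (Ideal.span { p : MvPolynomial (Fin (n+1)) ℂ |
          ∃ i : Fin n, p = X (Fin.castSucc i) ^ k - X (Fin.last n) ^ k }) ^ d ∧
    fatIdealK n k d ξ
      = Ideal.span { p : MvPolynomial (Fin (n+1)) ℂ |
          ∃ a : Fin n → ℕ, (∑ i, a i) = d ∧
            p = ∏ i : Fin n,
              (X (Fin.castSucc i) ^ k - X (Fin.last n) ^ k) ^ a i } ∧
    fatIdealK n k d ξ = (⨅ g : Fin n → ZMod k, qIdeal n k ξ g) ^ d :=
  stmt17_general n k d hk ξ hξ
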